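/- Let G be a connected graph on n ≥ 2 vertices. Then PI_w(G) ≥ n(4n − 6), with equality if and only if G is the path P_n. -/

import Mathlib

open Finset
open scoped Classical

/-- Number of vertices strictly closer to `u` than to `v`. -/
noncomputable def ncl {V : Type*} [Fintype V] (G : SimpleGraph V) (u v : V) : ℕ :=
  (Finset.univ.filter fun x => G.dist x u < G.dist x v).card

/-- Weighted vertex PI index: each edge `uv` contributes
`(deg u + deg v) * (n_u(e) + n_v(e))`; each edge is counted twice in the double sum. -/
noncomputable def PIw {V : Type*} [Fintype V] (G : SimpleGraph V) : ℝ :=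
  (∑ u, ∑ v, if G.Adj u v then
    (((G.degree u + G.degree v : ℕ) : ℝ) * ((ncl G u v + ncl G v u : ℕ) : ℝ)) else 0) / 2

/-!
Fix a vertex `x` and call an edge `uv` non-level if `d(x,u) ≠ d(x,v)`. Exchanging the order of
summation, `PI_w(G) = ∑ₓ ∑ᵥ deg(v) sₓ(v)`, where `sₓ(v) ≤ deg(v)` counts the non-level edges at `v`.
Every `v ≠ x` has a neighbour closer to `x`, so there are at least `n - 1` non-level edges and
`∑ᵥ sₓ(v) ≥ 2(n - 1)`. As `deg·s ≥ s² ≥ 3s - 2`, each inner sum is at least `4n - 6`, with equality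
iff `sₓ = deg ∈ {1, 2}` and `∑ deg = 2(n - 1)`. A connected graph of maximum degree `2` with a leaf
`a` is a path, because `d(a, ·)` is then injective. Conversely, a path is bipartite, so all its
edges are non-level, and its degree sequence attains equality.
-/

lemma Nat.three_mul_le_mul_add_two {s d : ℕ} (h : s ≤ d) : 3 * s ≤ d * s + 2 := by
  have : s * s ≤ d * s := Nat.mul_le_mul_right s h
  rcases Nat.lt_or_ge s 3 with hs | hs
  · interval_cases s <;> omega
  · nlinarith

lemma Nat.three_mul_eq_mul_add_two_iff {s d : ℕ} (h : s ≤ d) :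
    3 * s = d * s + 2 ↔ s = d ∧ (d = 1 ∨ d = 2) := by
  constructor
  · intro heq
    have : s * s ≤ d * s := Nat.mul_le_mul_right s h
    have : s ≤ 3 := by nlinarith
    interval_cases s <;> omega
  · rintro ⟨rfl, rfl | rfl⟩ <;> rfl

lemma four_mul_card_le_sum_mul_add_six {ι : Type*} [Fintype ι] {s d : ι → ℕ}
    (hsd : ∀ i, s i ≤ d i) (hs : 2 * Fintype.card ι ≤ ∑ i, s i + 2) :
    4 * Fintype.card ι ≤ ∑ i, d i * s i + 6 ∧
      (4 * Fintype.card ι = ∑ i, d i * s i + 6 ↔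
        (∀ i, s i = d i) ∧ (∀ i, d i = 1 ∨ d i = 2) ∧ ∑ i, d i + 2 = 2 * Fintype.card ι) := by
  have hle : ∑ i, 3 * s i ≤ ∑ i, (d i * s i + 2) :=
    sum_le_sum fun i _ => Nat.three_mul_le_mul_add_two (hsd i)
  rw [← mul_sum, sum_add_distrib, sum_const, card_univ, smul_eq_mul] at hle
  refine ⟨by omega, ⟨fun heq => ?_, ?_⟩⟩
  · have hpt : ∀ i, 3 * s i = d i * s i + 2 := by
      have hsum : ∑ i, 3 * s i = ∑ i, (d i * s i + 2) := by
        rw [← mul_sum, sum_add_distrib, sum_const, card_univ, smul_eq_mul]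
        omega
      exact fun i => (sum_eq_sum_iff_of_le fun i _ =>
        Nat.three_mul_le_mul_add_two (hsd i)).mp hsum i (mem_univ i)
    have hcase := fun i => (Nat.three_mul_eq_mul_add_two_iff (hsd i)).mp (hpt i)
    have hsum : ∑ i, s i = ∑ i, d i := sum_congr rfl fun i _ => (hcase i).1
    exact ⟨fun i => (hcase i).1, fun i => (hcase i).2, by omega⟩
  · rintro ⟨hsd, hd, hsum⟩
    have hpt : ∀ i, d i * s i + 2 = 3 * d i := fun i => by
      rw [hsd i]; rcases hd i with h | h <;> rw [h]
    have htot : ∑ i, (d i * s i + 2) = 3 * ∑ i, d i := by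
      rw [mul_sum]; exact sum_congr rfl fun i _ => hpt i
    rw [sum_add_distrib, sum_const, card_univ, smul_eq_mul] at htot
    omega

lemma Fin.card_filter_val_eq (n k : ℕ) : #{j : Fin n | (j : ℕ) = k} = if k < n then 1 else 0 := by
  split_ifs with h
  · exact card_eq_one.2 ⟨⟨k, h⟩, by ext j; simp [Fin.ext_iff]⟩
  · simp only [card_eq_zero, filter_eq_empty_iff]
    omega

lemma Finset.sum_sum_ite_add_eq_two_nsmul {ι M : Type*} [Fintype ι] [AddCommMonoid M]
    (r : ι → ι → Prop) [DecidableRel r] (hr : ∀ i j, r i j → r j i) (f : ι → M) :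
    ∑ i, ∑ j, (if r i j then f i + f j else 0) = 2 • ∑ i, #{j | r i j} • f i := by
  have hsymm : ∑ i, ∑ j, (if r i j then f j else 0) = ∑ i, ∑ j, (if r i j then f i else 0) := by
    rw [sum_comm]
    exact sum_congr rfl fun i _ => sum_congr rfl fun j _ => by
      simp only [show r j i ↔ r i j from ⟨hr j i, hr i j⟩]
  simp only [ite_add_zero, sum_add_distrib, hsymm, ← two_nsmul]
  congr 1
  exact sum_congr rfl fun i _ => by rw [← sum_filter, sum_const]

namespace SimpleGraph

variable {V : Type*} {G : SimpleGraph V}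

lemma Reachable.exists_adj_dist_add_one_eq {x v : V} (h : G.Reachable x v) (hne : x ≠ v) :
    ∃ u, G.Adj u v ∧ G.dist x u + 1 = G.dist x v := by
  obtain ⟨p, hp⟩ := h.exists_walk_length_eq_dist
  have hnil : ¬p.Nil := fun hnil => hne hnil.eq
  have hadj := p.adj_penultimate hnil
  refine ⟨p.penultimate, hadj, le_antisymm ?_ ?_⟩
  · have := dist_le p.dropLast
    have := Walk.length_dropLast_add_one hnil
    omega
  · have := hadj.reachable.dist_triangle_right x
    rwa [dist_eq_one_iff_adj.mpr hadj] at this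

lemma Coloring.dist_ne_of_adj (c : G.Coloring Bool) {x u v : V} (hxu : G.Reachable x u)
    (huv : G.Adj u v) : G.dist x u ≠ G.dist x v := by
  intro h
  obtain ⟨p, hp⟩ := hxu.exists_walk_length_eq_dist
  obtain ⟨q, hq⟩ := (hxu.trans huv.reachable).exists_walk_length_eq_dist
  have hpq := c.even_length_iff_congr p
  rw [hp, h, ← hq, c.even_length_iff_congr q] at hpq
  have := c.valid huv
  revert hpq this
  cases c x <;> cases c u <;> cases c v <;> simp

variable [Fintype V]

section

variable (G)

noncomputable def nonLevelDegree (x v : V) : ℕ := #{u | G.Adj v u ∧ G.dist x u ≠ G.dist x v}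

lemma nonLevelDegree_le_degree (x v : V) : G.nonLevelDegree x v ≤ G.degree v := by
  rw [← card_neighborFinset_eq_degree, nonLevelDegree]
  exact card_le_card fun u hu => by simp_all

lemma nonLevelDegree_eq_degree_iff (x v : V) :
    G.nonLevelDegree x v = G.degree v ↔ ∀ u, G.Adj v u → G.dist x u ≠ G.dist x v := by
  rw [← card_neighborFinset_eq_degree, nonLevelDegree, ← filter_filter, ← neighborFinset_eq_filter,
    card_filter_eq_iff]
  simp

end

lemma Preconnected.two_mul_card_le_sum_nonLevelDegree (hG : G.Preconnected) (x : V) :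
    2 * Fintype.card V ≤ ∑ v, G.nonLevelDegree x v + 2 := by
  set closer : V → ℕ := fun v => #{u | G.Adj u v ∧ G.dist x u < G.dist x v}
  set farther : V → ℕ := fun v => #{u | G.Adj v u ∧ G.dist x v < G.dist x u}
  have hsplit : ∀ v, farther v + closer v ≤ G.nonLevelDegree x v := fun v => by
    rw [← card_union_of_disjoint (disjoint_filter.2 fun u _ h1 h2 => by omega)]
    refine card_le_card fun u hu => ?_
    simp only [mem_union, mem_filter, mem_univ, true_and] at hu
    simp only [mem_filter, mem_univ, true_and]
    rcases hu with h | h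
    · exact ⟨h.1, by omega⟩
    · exact ⟨h.1.symm, by omega⟩
  have hcount : ∑ v, farther v = ∑ v, closer v :=
    sum_card_bipartiteAbove_eq_sum_card_bipartiteBelow
      (fun a b => G.Adj a b ∧ G.dist x a < G.dist x b)
  have hcloser : Fintype.card V ≤ ∑ v, closer v + 1 := by
    calc Fintype.card V = #(univ.erase x) + 1 := (card_erase_add_one (mem_univ x)).symm
      _ ≤ ∑ v ∈ univ.erase x, closer v + 1 := by
        gcongr
        simpa using card_nsmul_le_sum (univ.erase x) closer 1 fun v hv => by
          obtain ⟨u, hadj, hu⟩ := (hG x v).exists_adj_dist_add_one_eq (ne_of_mem_erase hv).symm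
          exact card_pos.2 ⟨u, by simp [hadj]; omega⟩
      _ ≤ ∑ v, closer v + 1 := by gcongr; exact subset_univ _
  have := sum_le_sum fun v (_ : v ∈ univ) => hsplit v
  rw [sum_add_distrib] at this
  omega

lemma pathGraph_degree {n : ℕ} (i : Fin n) :
    (pathGraph n).degree i =
      (if (i : ℕ) + 1 < n then 1 else 0) + (if 0 < (i : ℕ) then 1 else 0) := by
  have hnbr : (pathGraph n).neighborFinset i =
      ({j : Fin n | (j : ℕ) = i + 1} : Finset (Fin n)) ∪
        ({j : Fin n | (j : ℕ) + 1 = i} : Finset (Fin n)) := by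
    ext j
    simp only [mem_neighborFinset, pathGraph_adj, mem_union, mem_filter, mem_univ, true_and]
    omega
  have hpred : #{j : Fin n | (j : ℕ) + 1 = i} = if 0 < (i : ℕ) then 1 else 0 := by
    split_ifs with h
    · rw [filter_congr (q := fun j : Fin n => (j : ℕ) = i - 1) (fun j _ => by omega),
        Fin.card_filter_val_eq, if_pos (by omega)]
    · simp only [card_eq_zero, filter_eq_empty_iff]
      omega
  rw [← card_neighborFinset_eq_degree, hnbr,
    card_union_of_disjoint (disjoint_filter.2 fun j _ h1 h2 => by omega),
    Fin.card_filter_val_eq, hpred]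

lemma sum_degree_pathGraph {n : ℕ} (hn : 1 ≤ n) :
    ∑ i : Fin n, (pathGraph n).degree i + 2 = 2 * n := by
  obtain ⟨m, rfl⟩ : ∃ m, n = m + 1 := ⟨n - 1, by omega⟩
  have hlast : ∑ i : Fin (m + 1), (if (i : ℕ) + 1 < m + 1 then 1 else 0) = m := by
    rw [Fin.sum_univ_castSucc]; simp
  have hfirst : ∑ i : Fin (m + 1), (if 0 < (i : ℕ) then 1 else 0) = m := by
    rw [Fin.sum_univ_succ]; simp
  simp only [pathGraph_degree, sum_add_distrib, hlast, hfirst]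
  omega

lemma Preconnected.eq_of_adj_of_dist_lt_of_degree_le_two (hG : G.Preconnected)
    (hdeg : ∀ v, G.degree v ≤ 2) {a : V} (ha : G.degree a ≤ 1) {p y z : V}
    (hy : G.Adj p y) (hz : G.Adj p z) (hpy : G.dist a p < G.dist a y)
    (hpz : G.dist a p < G.dist a z) : y = z := by
  by_contra hyz
  by_cases hpa : a = p
  · subst hpa
    have : 1 < #(G.neighborFinset a) :=
      one_lt_card.2 ⟨y, by simpa using hy, z, by simpa using hz, hyz⟩
    rw [card_neighborFinset_eq_degree] at this
    omega
  · obtain ⟨q, hq, hqp⟩ := (hG a p).exists_adj_dist_add_one_eq hpa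
    have : 2 < #(G.neighborFinset p) :=
      two_lt_card.2 ⟨q, by simpa using hq.symm, y, by simpa using hy, z, by simpa using hz,
        fun h => by subst h; omega, fun h => by subst h; omega, hyz⟩
    rw [card_neighborFinset_eq_degree] at this
    have := hdeg p
    omega

lemma Preconnected.dist_injective_of_degree_le_two (hG : G.Preconnected)
    (hdeg : ∀ v, G.degree v ≤ 2) {a : V} (ha : G.degree a ≤ 1) :
    Function.Injective (G.dist a) := by
  suffices ∀ k y z, G.dist a y = k → G.dist a z = k → y = z from fun y z h => this _ y z rfl h.symm
  intro k
  induction k with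
  | zero =>
    intro y z hy hz
    rw [(hG a y).dist_eq_zero_iff] at hy
    rw [(hG a z).dist_eq_zero_iff] at hz
    rw [← hy, ← hz]
  | succ k ih =>
    intro y z hy hz
    obtain ⟨py, hpy, hdy⟩ := (hG a y).exists_adj_dist_add_one_eq (by rintro rfl; simp at hy)
    obtain ⟨pz, hpz, hdz⟩ := (hG a z).exists_adj_dist_add_one_eq (by rintro rfl; simp at hz)
    obtain rfl : py = pz := ih py pz (by omega) (by omega)
    exact hG.eq_of_adj_of_dist_lt_of_degree_le_two hdeg ha hpy hpz (by omega) (by omega)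

lemma Connected.nonempty_iso_pathGraph_of_degree_le_two (hG : G.Connected)
    (hdeg : ∀ v, G.degree v ≤ 2) {a : V} (ha : G.degree a ≤ 1) :
    Nonempty (G ≃g pathGraph (Fintype.card V)) := by
  have hinj := hG.preconnected.dist_injective_of_degree_le_two hdeg ha
  have hlt : ∀ y, G.dist a y < Fintype.card V := fun y => by
    obtain ⟨p, hp, hlen⟩ := hG.exists_path_of_dist a y
    exact hlen ▸ hp.length_lt
  let φ : V → Fin (Fintype.card V) := fun y => ⟨G.dist a y, hlt y⟩
  have hφ : Function.Bijective φ := by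
    rw [Fintype.bijective_iff_injective_and_card]
    exact ⟨fun y z h => hinj (Fin.mk.inj h), by simp⟩
  refine ⟨⟨Equiv.ofBijective φ hφ, fun {y z} => ?_⟩⟩
  simp only [Equiv.ofBijective_apply, pathGraph_adj, φ]
  constructor
  · have hparent : ∀ y z, G.dist a y + 1 = G.dist a z → G.Adj y z := fun y z h => by
      obtain ⟨u, hu, hdu⟩ := (hG a z).exists_adj_dist_add_one_eq (by rintro rfl; simp at h)
      exact hinj (by omega : G.dist a u = G.dist a y) ▸ hu
    rintro (h | h)
    · exact hparent y z h
    · exact (hparent z y h).symm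
  · intro h
    have hne : G.dist a y ≠ G.dist a z := fun hd => h.ne (hinj hd)
    rcases h.diff_dist_adj (u := a) with hd | hd | hd <;> omega

lemma Connected.nonempty_iso_pathGraph_iff (hG : G.Connected) (hn : 2 ≤ Fintype.card V) :
    Nonempty (G ≃g pathGraph (Fintype.card V)) ↔
      (∀ x v, G.nonLevelDegree x v = G.degree v) ∧ (∀ v, G.degree v = 1 ∨ G.degree v = 2) ∧
        ∑ v, G.degree v + 2 = 2 * Fintype.card V := by
  constructor
  · rintro ⟨e⟩
    have hdeg : ∀ v, G.degree v = (pathGraph _).degree (e v) := fun v => (e.degree_eq v).symm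
    refine ⟨fun x v => ?_, fun v => ?_, ?_⟩
    · rw [nonLevelDegree_eq_degree_iff]
      exact fun u hvu =>
        (Coloring.dist_ne_of_adj ((pathGraph.bicoloring _).comp e.toHom) (hG x v) hvu).symm
    · have := (e v).isLt
      rw [hdeg, pathGraph_degree]
      split_ifs <;> omega
    · rw [Fintype.sum_equiv e.toEquiv _ (fun w => (pathGraph _).degree w) hdeg,
        sum_degree_pathGraph (by omega)]
  · rintro ⟨-, hdeg, hsum⟩
    obtain ⟨a, ha⟩ : ∃ a, G.degree a ≤ 1 := by
      by_contra! h
      have := card_nsmul_le_sum univ (fun v => G.degree v) 2 fun v _ => h v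
      rw [card_univ, smul_eq_mul] at this
      omega
    exact hG.nonempty_iso_pathGraph_of_degree_le_two
      (fun v => by rcases hdeg v with h | h <;> omega) ha

end SimpleGraph

open SimpleGraph in
lemma PIw_eq_sum_degree_mul_nonLevelDegree {V : Type*} [Fintype V] (G : SimpleGraph V) :
    PIw G = ∑ x, ((∑ v, G.degree v * G.nonLevelDegree x v : ℕ) : ℝ) := by
  have hncl : ∀ u v, ncl G u v + ncl G v u = #{x | G.dist x u ≠ G.dist x v} := fun u v => by
    rw [ncl, ncl, ← card_union_of_disjoint (disjoint_filter.2 fun x _ h1 h2 => by omega)]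
    congr 1
    ext x
    simp only [mem_union, mem_filter, mem_univ, true_and]
    omega
  have hsum : (∑ u, ∑ v, if G.Adj u v then
      (G.degree u + G.degree v) * (ncl G u v + ncl G v u) else 0) =
      2 * ∑ x, ∑ v, G.degree v * G.nonLevelDegree x v := by
    calc _ = ∑ u, ∑ v, ∑ x,
          if G.Adj u v ∧ G.dist x u ≠ G.dist x v then G.degree u + G.degree v else 0 := by
          refine sum_congr rfl fun u _ => sum_congr rfl fun v _ => ?_
          rw [hncl, card_filter, mul_sum]
          split_ifs <;> simp_all
      _ = ∑ x, ∑ u, ∑ v,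
          if G.Adj u v ∧ G.dist x u ≠ G.dist x v then G.degree u + G.degree v else 0 := by
          exact (sum_congr rfl fun _ _ => sum_comm).trans sum_comm
      _ = 2 * ∑ x, ∑ v, G.degree v * G.nonLevelDegree x v := by
          rw [mul_sum]
          refine sum_congr rfl fun x _ => ?_
          rw [sum_sum_ite_add_eq_two_nsmul (fun u v => G.Adj u v ∧ G.dist x u ≠ G.dist x v)
            (fun u v h => ⟨h.1.symm, h.2.symm⟩)]
          simp [nonLevelDegree, mul_comm, eq_comm]
  have hsumR := congrArg (Nat.cast : ℕ → ℝ) hsum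
  push_cast [Nat.cast_ite] at hsumR
  rw [PIw]
  push_cast
  rw [hsumR]
  ring

theorem PIw_lower_bound {V : Type*} [Fintype V] (G : SimpleGraph V)
    (hconn : G.Connected) (hn : 2 ≤ Fintype.card V) :
    PIw G ≥ (Fintype.card V : ℝ) * (4 * (Fintype.card V : ℝ) - 6) ∧
    (PIw G = (Fintype.card V : ℝ) * (4 * (Fintype.card V : ℝ) - 6) ↔
      Nonempty (G ≃g SimpleGraph.pathGraph (Fintype.card V))) := by
  have : Nonempty V := Fintype.card_pos_iff.mp (by omega)
  have hx := fun x => four_mul_card_le_sum_mul_add_six (G.nonLevelDegree_le_degree x)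
    (hconn.preconnected.two_mul_card_le_sum_nonLevelDegree x)
  have hcast : ∀ x, (4 * (Fintype.card V : ℝ) - 6 = (∑ v, G.degree v * G.nonLevelDegree x v : ℕ)
      ↔ 4 * Fintype.card V = ∑ v, G.degree v * G.nonLevelDegree x v + 6) := fun x => by
    rw [sub_eq_iff_eq_add]; norm_cast
  have hle : ∀ x ∈ univ,
      4 * (Fintype.card V : ℝ) - 6 ≤ (∑ v, G.degree v * G.nonLevelDegree x v : ℕ) := fun x _ => by
    have : 4 * (Fintype.card V : ℝ) ≤ (∑ v, G.degree v * G.nonLevelDegree x v : ℕ) + 6 := by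
      exact_mod_cast (hx x).1
    linarith
  have hconst : (Fintype.card V : ℝ) * (4 * (Fintype.card V : ℝ) - 6) =
      ∑ _x : V, (4 * (Fintype.card V : ℝ) - 6) := by
    rw [sum_const, card_univ, nsmul_eq_mul]
  rw [PIw_eq_sum_degree_mul_nonLevelDegree, hconst, hconn.nonempty_iso_pathGraph_iff hn]
  refine ⟨sum_le_sum hle, ?_⟩
  rw [eq_comm, sum_eq_sum_iff_of_le hle]
  simp only [mem_univ, forall_const, hcast, (hx _).2, forall_and]
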